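/- arXiv:1502.00349 — 6 statements merged into one kernel-verified Lean document; each statement's English description precedes it below -/
import Mathlib

section
/- Let μ > 0 and let m, g : ℝ → ℝ be differentiable with m(r) > 0, μ·m(r) < 1 and m'(r)² + g'(r)² = 1 for all r (so that φ(r, θ) = (m(r)cos θ, m(r)sin θ, g(r)) is an isometric embedding of the warped surface (M, h = dr² + m²dθ²) into Euclidean ℝ³). For a point p = (x, y, z) ∈ ℝ³ with μ²(x² + y²) < 1 set λ̃(p) = 1 − μ²(x² + y²), and define the quadratic form ã_p(V) = [(1 − μ²x²)V₁² + (1 − μ²y²)V₂² − 2μ²xy·V₁V₂]/λ̃(p)² + V₃²/λ̃(p). Then for every (r, θ) and every tangent vector (u, w) ∈ ℝ², with V = Dφ(u, w) = (m'(r)cos θ·u − m(r)sin θ·w, m'(r)sin θ·u + m(r)cos θ·w, g'(r)·u), one has ã_{φ(r,θ)}(V) = u²/λ(r) + m(r)²·w²/λ(r)², where λ(r) = 1 − μ²m(r)². That is, φ pulls back the Riemannian metric ã on the cylinder 𝒰_μ = {x² + y² < 1/μ²} to the Riemannian part a of the rotational Randers metric, a₁₁ = 1/λ, a₁₂ = 0,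 a₂₂ = m²/λ². -/
/-!
The Riemannian part of the Zermelo data `(δ, W̃)` is `ã(V) = (λ̃ |V|² + ⟨W̃, V⟩²) / λ̃²`, and the
coordinate formula for `ã` is exactly this expression written out. Along the embedding `φ` the
three ingredients are computed from `cos² θ + sin² θ = 1` and `m'² + g'² = 1`: `λ̃ ∘ φ = λ`,
`|Dφ(u, w)|² = u² + m² w²`, and `⟨W̃, Dφ(u, w)⟩ = μ m² w` because `W̃ ∘ φ = μ Dφ(0, 1)` is the
image of the wind `μ ∂/∂θ`. Then `(λ (u² + m² w²) + μ² m⁴ w²) / λ² = u²/λ + m² w²/λ²`.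
-/

section Field

variable {K : Type*} [Field K]

theorem div_sq_self (a : K) : a / a ^ 2 = a⁻¹ := by
  rw [sq, div_self_mul_self']

theorem mul_div_sq_self (a b : K) : a * b / a ^ 2 = b / a := by
  rw [mul_comm, mul_div_assoc, div_sq_self, div_eq_mul_inv]

theorem zermeloForm_eq (μ x y V₁ V₂ V₃ : K) :
    ((1 - μ ^ 2 * x ^ 2) * V₁ ^ 2 + (1 - μ ^ 2 * y ^ 2) * V₂ ^ 2
        - 2 * μ ^ 2 * x * y * V₁ * V₂) / (1 - μ ^ 2 * (x ^ 2 + y ^ 2)) ^ 2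
      + V₃ ^ 2 / (1 - μ ^ 2 * (x ^ 2 + y ^ 2))
      = ((1 - μ ^ 2 * (x ^ 2 + y ^ 2)) * (V₁ ^ 2 + V₂ ^ 2 + V₃ ^ 2)
          + (μ * (x * V₂ - y * V₁)) ^ 2) / (1 - μ ^ 2 * (x ^ 2 + y ^ 2)) ^ 2 := by
  set l := 1 - μ ^ 2 * (x ^ 2 + y ^ 2) with hl
  have hnum : (1 - μ ^ 2 * x ^ 2) * V₁ ^ 2 + (1 - μ ^ 2 * y ^ 2) * V₂ ^ 2
      - 2 * μ ^ 2 * x * y * V₁ * V₂ = l * (V₁ ^ 2 + V₂ ^ 2) + (μ * (x * V₂ - y * V₁)) ^ 2 := by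
    rw [hl]; ring
  rw [hnum, ← mul_div_sq_self l (V₃ ^ 2)]
  ring

theorem rotation_radius_sq {c s : K} (hcs : c ^ 2 + s ^ 2 = 1) (ρ : K) :
    (ρ * c) ^ 2 + (ρ * s) ^ 2 = ρ ^ 2 := by
  linear_combination ρ ^ 2 * hcs

theorem rotation_tangent_normSq {c s : K} (hcs : c ^ 2 + s ^ 2 = 1) (ρ ρ' h' u w : K) :
    (ρ' * c * u - ρ * s * w) ^ 2 + (ρ' * s * u + ρ * c * w) ^ 2 + (h' * u) ^ 2
      = (ρ' ^ 2 + h' ^ 2) * u ^ 2 + ρ ^ 2 * w ^ 2 := by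
  linear_combination ((ρ' * u) ^ 2 + (ρ * w) ^ 2) * hcs

theorem rotation_tangent_wind {c s : K} (hcs : c ^ 2 + s ^ 2 = 1) (ρ ρ' u w : K) :
    ρ * c * (ρ' * s * u + ρ * c * w) - ρ * s * (ρ' * c * u - ρ * s * w) = ρ ^ 2 * w := by
  linear_combination ρ ^ 2 * w * hcs

theorem randersRiemannianPart_eq (μ ρ u w : K) :
    ((1 - μ ^ 2 * ρ ^ 2) * (u ^ 2 + ρ ^ 2 * w ^ 2) + (μ * (ρ ^ 2 * w)) ^ 2)
        / (1 - μ ^ 2 * ρ ^ 2) ^ 2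
      = u ^ 2 / (1 - μ ^ 2 * ρ ^ 2) + ρ ^ 2 * w ^ 2 / (1 - μ ^ 2 * ρ ^ 2) ^ 2 := by
  rw [← mul_div_sq_self (1 - μ ^ 2 * ρ ^ 2) (u ^ 2)]
  ring

end Field

theorem randers_embedding_riemannian_part_general
    (μ : ℝ) (m m' g' : ℝ → ℝ)
    (harc : ∀ x, (m' x) ^ 2 + (g' x) ^ 2 = 1) :
    ∀ r θ u w : ℝ,
      let V₁ := m' r * Real.cos θ * u - m r * Real.sin θ * w
      let V₂ := m' r * Real.sin θ * u + m r * Real.cos θ * w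
      let V₃ := g' r * u
      let x := m r * Real.cos θ
      let y := m r * Real.sin θ
      let lamt := 1 - μ ^ 2 * (x ^ 2 + y ^ 2)
      let lam := 1 - μ ^ 2 * (m r) ^ 2
      ((1 - μ ^ 2 * x ^ 2) * V₁ ^ 2 + (1 - μ ^ 2 * y ^ 2) * V₂ ^ 2
          - 2 * μ ^ 2 * x * y * V₁ * V₂) / lamt ^ 2 + V₃ ^ 2 / lamt
        = u ^ 2 / lam + (m r) ^ 2 * w ^ 2 / lam ^ 2 := by
  intro r θ u w
  have hcs := Real.cos_sq_add_sin_sq θ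
  simp only
  rw [zermeloForm_eq, rotation_radius_sq hcs, rotation_tangent_normSq hcs,
    rotation_tangent_wind hcs, harc, one_mul, randersRiemannianPart_eq]

/-- The embedding `φ(r, θ) = (m(r)cos θ, m(r)sin θ, g(r))` pulls back the Riemannian
part `ã` of the rotational Minkowski–Randers metric on the cylinder `𝒰_μ` to the
Riemannian part `a = diag(1/λ, m²/λ²)` of the rotational Randers metric. -/
theorem randers_embedding_riemannian_part
    (μ : ℝ) (hμ : 0 < μ) (m g m' g' : ℝ → ℝ)
    (hm : ∀ x, HasDerivAt m (m' x) x) (hg : ∀ x, HasDerivAt g (g' x) x)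
    (hmpos : ∀ x, 0 < m x) (hmb : ∀ x, μ * m x < 1)
    (harc : ∀ x, (m' x) ^ 2 + (g' x) ^ 2 = 1) :
    ∀ r θ u w : ℝ,
      let V₁ := m' r * Real.cos θ * u - m r * Real.sin θ * w
      let V₂ := m' r * Real.sin θ * u + m r * Real.cos θ * w
      let V₃ := g' r * u
      let x := m r * Real.cos θ
      let y := m r * Real.sin θ
      let lamt := 1 - μ ^ 2 * (x ^ 2 + y ^ 2)
      let lam := 1 - μ ^ 2 * (m r) ^ 2
      ((1 - μ ^ 2 * x ^ 2) * V₁ ^ 2 + (1 - μ ^ 2 * y ^ 2) * V₂ ^ 2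
          - 2 * μ ^ 2 * x * y * V₁ * V₂) / lamt ^ 2 + V₃ ^ 2 / lamt
        = u ^ 2 / lam + (m r) ^ 2 * w ^ 2 / lam ^ 2 :=
  randers_embedding_riemannian_part_general μ m m' g' harc
end

section
/- Let m : ℝ → ℝ and μ > 0 satisfy 0 < μ·m(x) < 1 for all x, and set λ(x) = 1 − μ²m(x)². Let r, θ : I → ℝ be differentiable with r'(s)² + m(r(s))²·θ'(s)² = 1 and m(r(s))²·θ'(s) = ν (constant) for all s. Then the Finslerian momentum p₂ = (1/2)·∂F²/∂y² of the rotational Randers metric F = α + β is conserved along the twisted geodesic P(s) = (r(s), θ(s) + μs), with the conservation law p₂(s) = [m(r(s))²·(θ'(s) + μ)/λ(r(s))²] / α(P, Ṗ) − μ·m(r(s))²/λ(r(s)) = ν/(1 + μν) for all s, where α(P, Ṗ) = (1 + μν)/λ(r(s)). -/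
/-! The momentum is an explicit rational function of `m`, `θ'` and `μ`; after the Clairaut
substitution `ν = m² θ'` it collapses to `ν / (1 + μν)`. The only analytic input is that the
denominators `λ = 1 - μ²m²` and `1 + μν` do not vanish, and the latter holds because unit speed
gives `m² θ'² ≤ 1`, whence `(μν)² = (μm)² · m²θ'² < 1`. -/

lemma sq_mul_clairaut_lt_one {μ m v w : ℝ} (hμm : (μ * m) ^ 2 < 1)
    (hunit : w ^ 2 + m ^ 2 * v ^ 2 = 1) : (μ * (m ^ 2 * v)) ^ 2 < 1 := by
  have hmv : (m * v) ^ 2 ≤ 1 := by nlinarith [sq_nonneg w]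
  calc (μ * (m ^ 2 * v)) ^ 2 = (μ * m) ^ 2 * (m * v) ^ 2 := by ring
    _ ≤ (μ * m) ^ 2 * 1 := by gcongr
    _ < 1 := by linarith

lemma one_add_pos_of_sq_lt_one {x : ℝ} (hx : x ^ 2 < 1) : 0 < 1 + x := by
  linarith [(abs_lt.mp ((sq_lt_one_iff_abs_lt_one x).mp hx)).1]

lemma twisted_momentum_eq {μ m v L : ℝ} (hL : L = 1 - μ ^ 2 * m ^ 2) (hL0 : L ≠ 0)
    (hα : 1 + μ * (m ^ 2 * v) ≠ 0) :
    (m ^ 2 * (v + μ) / L ^ 2) / ((1 + μ * (m ^ 2 * v)) / L) - μ * m ^ 2 / L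
      = m ^ 2 * v / (1 + μ * (m ^ 2 * v)) := by
  rw [div_div_div_eq, div_sub_div _ _ (by positivity) hL0, div_eq_div_iff (by positivity) hα, hL]
  ring

theorem randers_momentum_conservation_general
    (m : ℝ → ℝ) (μ ν : ℝ)
    (hm : ∀ x, 0 < μ * m x ∧ μ * m x < 1)
    (lam : ℝ → ℝ) (hlam : ∀ x, lam x = 1 - μ ^ 2 * (m x) ^ 2)
    (I : Set ℝ) (r r' θ' : ℝ → ℝ)
    (hunit : ∀ s ∈ I, (r' s) ^ 2 + (m (r s)) ^ 2 * (θ' s) ^ 2 = 1)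
    (hclair : ∀ s ∈ I, (m (r s)) ^ 2 * θ' s = ν) :
    ∀ s ∈ I,
      ((m (r s)) ^ 2 * (θ' s + μ) / (lam (r s)) ^ 2) / ((1 + μ * ν) / lam (r s))
          - μ * (m (r s)) ^ 2 / lam (r s)
        = ν / (1 + μ * ν) := by
  intro s hs
  obtain ⟨hμm_pos, hμm_lt_one⟩ := hm (r s)
  have hμm : (μ * m (r s)) ^ 2 < 1 := by nlinarith
  have hlam_ne : lam (r s) ≠ 0 := by rw [hlam]; nlinarith
  have hα := one_add_pos_of_sq_lt_one (sq_mul_clairaut_lt_one hμm (hunit s hs))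
  rw [← hclair s hs]
  exact twisted_momentum_eq (hlam _) hlam_ne hα.ne'

/-- Conservation law for the Finslerian momentum `p₂ = (1/2)∂F²/∂y² = a₂₂y²/α + b₂`
along the twisted geodesic `P(s) = (r s, θ s + μ s)` of the rotational Randers metric:
`p₂(s) = ν/(1 + μν)` for all `s`, where `α(P, Ṗ) = (1 + μν)/λ(r(s))`. -/
theorem randers_momentum_conservation
    (m : ℝ → ℝ) (μ ν : ℝ) (hμ : 0 < μ)
    (hm : ∀ x, 0 < μ * m x ∧ μ * m x < 1)
    (lam : ℝ → ℝ) (hlam : ∀ x, lam x = 1 - μ ^ 2 * (m x) ^ 2)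
    (I : Set ℝ) (r θ r' θ' : ℝ → ℝ)
    (hr : ∀ s ∈ I, HasDerivAt r (r' s) s)
    (hθ : ∀ s ∈ I, HasDerivAt θ (θ' s) s)
    (hunit : ∀ s ∈ I, (r' s) ^ 2 + (m (r s)) ^ 2 * (θ' s) ^ 2 = 1)
    (hclair : ∀ s ∈ I, (m (r s)) ^ 2 * θ' s = ν) :
    ∀ s ∈ I,
      ((m (r s)) ^ 2 * (θ' s + μ) / (lam (r s)) ^ 2) / ((1 + μ * ν) / lam (r s))
          - μ * (m (r s)) ^ 2 / lam (r s)
        = ν / (1 + μ * ν) :=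
  randers_momentum_conservation_general m μ ν hm lam hlam I r r' θ' hunit hclair
end

section
/- (First Finslerian Clairaut relation.) Let m : ℝ → ℝ with 0 < m(x) < 1/μ for all x and μ > 0. Let r, θ : I → ℝ be differentiable with r'(s)² + m(r(s))²θ'(s)² = 1 and m(r(s))²θ'(s) = ν (constant). Write m = m(r(s)), and set |Ṗ(s)| = √(r'(s)² + m²(θ'(s) + μ)²), cos φ = r'(s), sin φ = m·θ'(s), cos ψ = r'(s)/|Ṗ(s)|, sin ψ = m·(θ'(s) + μ)/|Ṗ(s)| (the angles that the h-geodesic γ and the twisted F-geodesic P(s) = (r(s), θ(s) + μs) make with the meridian). Then for all s: |Ṗ(s)| = √(1 + 2μν + μ²m²) and √(1 + 2μν + μ²m²)·(cos ψ·cos φ + sin ψ·sin φ) = 1 + μν, i.e. √(1 + 2μν + μ²m²)·cos(ψ − φ) = 1 + μν. -/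
/-!
Write `γ̇ = r' ∂_r + θ' ∂_θ` and `W = μ ∂_θ`, so that `Ṗ = γ̇ + W`. Since `|∂_θ|_h = m` and
`h(γ̇, ∂_θ) = m² θ' = ν` is the Clairaut constant, expanding the `h`-norm gives
`|Ṗ|² = |γ̇|² + 2 h(γ̇, W) + |W|² = 1 + 2μν + μ²m²`, while `cos(ψ - φ) = h(Ṗ, γ̇) / |Ṗ|`
with `h(Ṗ, γ̇) = |γ̇|² + h(W, γ̇) = 1 + μν`.
-/

section Navigation

variable {x y M μ ν : ℝ}

theorem randers_navigation_speed_sq (hunit : x ^ 2 + M ^ 2 * y ^ 2 = 1) (hclair : M ^ 2 * y = ν) :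
    x ^ 2 + M ^ 2 * (y + μ) ^ 2 = 1 + 2 * μ * ν + μ ^ 2 * M ^ 2 := by
  linear_combination hunit + 2 * μ * hclair

theorem randers_navigation_inner (hunit : x ^ 2 + M ^ 2 * y ^ 2 = 1) (hclair : M ^ 2 * y = ν) :
    x * x + M * (y + μ) * (M * y) = 1 + μ * ν := by
  linear_combination hunit + μ * hclair

end Navigation

/-- Holds without assuming `a² + b² ≠ 0`: then `a = b = 0`, the divisions return `0`, and both
sides vanish. -/
theorem Real.sqrt_sq_add_sq_mul_normalized_inner (a b c d : ℝ) :
    √(a ^ 2 + b ^ 2) * (a / √(a ^ 2 + b ^ 2) * c + b / √(a ^ 2 + b ^ 2) * d) = a * c + b * d := by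
  by_cases h : √(a ^ 2 + b ^ 2) = 0
  · have hab : a ^ 2 + b ^ 2 = 0 := (Real.sqrt_eq_zero'.mp h).antisymm (by positivity)
    obtain ⟨ha, hb⟩ := (add_eq_zero_iff_of_nonneg (sq_nonneg a) (sq_nonneg b)).mp hab
    simp_all
  · field_simp

theorem randers_first_clairaut_relation_general
    (m : ℝ → ℝ) (μ ν : ℝ)
    (I : Set ℝ) (r r' θ' : ℝ → ℝ)
    (hunit : ∀ s ∈ I, (r' s) ^ 2 + (m (r s)) ^ 2 * (θ' s) ^ 2 = 1)
    (hclair : ∀ s ∈ I, (m (r s)) ^ 2 * θ' s = ν) :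
    ∀ s ∈ I,
      let nP := Real.sqrt ((r' s) ^ 2 + (m (r s)) ^ 2 * (θ' s + μ) ^ 2)
      let cosφ := r' s
      let sinφ := m (r s) * θ' s
      let cosψ := r' s / nP
      let sinψ := m (r s) * (θ' s + μ) / nP
      nP = Real.sqrt (1 + 2 * μ * ν + μ ^ 2 * (m (r s)) ^ 2) ∧
      Real.sqrt (1 + 2 * μ * ν + μ ^ 2 * (m (r s)) ^ 2) * (cosψ * cosφ + sinψ * sinφ)
        = 1 + μ * ν := by
  intro s hs
  have hspeed := randers_navigation_speed_sq (μ := μ) (hunit s hs) (hclair s hs)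
  refine ⟨by rw [hspeed], ?_⟩
  rw [← hspeed, ← randers_navigation_inner (μ := μ) (hunit s hs) (hclair s hs), ← mul_pow]
  exact Real.sqrt_sq_add_sq_mul_normalized_inner _ _ _ _

/-- First Finslerian Clairaut relation on a rotational Randers surface of revolution:
`|Ṗ| = √(1 + 2μν + μ²m²)` and `√(1 + 2μν + μ²m²)·cos(ψ − φ) = 1 + μν`, where `φ` and
`ψ` are the angles the `h`-geodesic `γ` and the twisted `F`-geodesic `P` make with the
meridian. -/
theorem randers_first_clairaut_relation
    (m : ℝ → ℝ) (μ ν : ℝ) (hμ : 0 < μ)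
    (hm : ∀ x, 0 < m x ∧ m x < 1 / μ)
    (I : Set ℝ) (r θ r' θ' : ℝ → ℝ)
    (hr : ∀ s ∈ I, HasDerivAt r (r' s) s)
    (hθ : ∀ s ∈ I, HasDerivAt θ (θ' s) s)
    (hunit : ∀ s ∈ I, (r' s) ^ 2 + (m (r s)) ^ 2 * (θ' s) ^ 2 = 1)
    (hclair : ∀ s ∈ I, (m (r s)) ^ 2 * θ' s = ν) :
    ∀ s ∈ I,
      let nP := Real.sqrt ((r' s) ^ 2 + (m (r s)) ^ 2 * (θ' s + μ) ^ 2)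
      let cosφ := r' s
      let sinφ := m (r s) * θ' s
      let cosψ := r' s / nP
      let sinψ := m (r s) * (θ' s + μ) / nP
      nP = Real.sqrt (1 + 2 * μ * ν + μ ^ 2 * (m (r s)) ^ 2) ∧
      Real.sqrt (1 + 2 * μ * ν + μ ^ 2 * (m (r s)) ^ 2) * (cosψ * cosφ + sinψ * sinφ)
        = 1 + μ * ν :=
  randers_first_clairaut_relation_general m μ ν I r r' θ' hunit hclair
end

section
/- (Second Finslerian Clairaut relation.) Let m : ℝ → ℝ with 0 < m(x) < 1/μ for all x and μ > 0. Let r, θ : I → ℝ be differentiable with r'(s)² + m(r(s))²θ'(s)² = 1 and m(r(s))²θ'(s) = ν (constant). Write m = m(r(s)), |Ṗ(s)| = √(r'(s)² + m²(θ'(s) + μ)²), and sin ψ = m·(θ'(s) + μ)/|Ṗ(s)|. Then for all s: m·sin ψ = (ν + μm²)/√(1 + 2μν + μ²m²). -/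
/-!
Since `Ṗ = γ̇ + W` with `W = μ ∂/∂θ`, `|Ṗ|²_h = |γ̇|²_h + 2 h(γ̇, W) + |W|²_h = 1 + 2μν + μ²m²`,
because `h(γ̇, ∂/∂θ) = m²θ'` is the Clairaut constant `ν`. Likewise `m · m(θ' + μ) = ν + μm²`,
so both the numerator and the norm in `m sin ψ` depend on `s` only through `m`.
-/

lemma randers_speed_sq_eq {dr m θ' μ ν : ℝ} (hunit : dr ^ 2 + m ^ 2 * θ' ^ 2 = 1)
    (hclair : m ^ 2 * θ' = ν) :
    dr ^ 2 + m ^ 2 * (θ' + μ) ^ 2 = 1 + 2 * μ * ν + μ ^ 2 * m ^ 2 := by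
  linear_combination hunit + 2 * μ * hclair

lemma randers_clairaut_numerator_eq {m θ' μ ν : ℝ} (hclair : m ^ 2 * θ' = ν) :
    m * (m * (θ' + μ)) = ν + μ * m ^ 2 := by
  linear_combination hclair

theorem randers_second_clairaut_relation_general
    (m : ℝ → ℝ) (μ ν : ℝ)
    (I : Set ℝ) (r r' θ' : ℝ → ℝ)
    (hunit : ∀ s ∈ I, (r' s) ^ 2 + (m (r s)) ^ 2 * (θ' s) ^ 2 = 1)
    (hclair : ∀ s ∈ I, (m (r s)) ^ 2 * θ' s = ν) :
    ∀ s ∈ I,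
      let nP := Real.sqrt ((r' s) ^ 2 + (m (r s)) ^ 2 * (θ' s + μ) ^ 2)
      let sinψ := m (r s) * (θ' s + μ) / nP
      m (r s) * sinψ
        = (ν + μ * (m (r s)) ^ 2) / Real.sqrt (1 + 2 * μ * ν + μ ^ 2 * (m (r s)) ^ 2) := by
  intro s hs
  simp only [randers_speed_sq_eq (hunit s hs) (hclair s hs)]
  rw [mul_div_assoc', randers_clairaut_numerator_eq (hclair s hs)]

/-- Second Finslerian Clairaut relation on a rotational Randers surface of revolution:
`m·sin ψ = (ν + μm²)/√(1 + 2μν + μ²m²)`, where `ψ` is the angle the twisted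
`F`-geodesic `P(s) = (r s, θ s + μs)` makes with the meridian. -/
theorem randers_second_clairaut_relation
    (m : ℝ → ℝ) (μ ν : ℝ) (hμ : 0 < μ)
    (hm : ∀ x, 0 < m x ∧ m x < 1 / μ)
    (I : Set ℝ) (r θ r' θ' : ℝ → ℝ)
    (hr : ∀ s ∈ I, HasDerivAt r (r' s) s)
    (hθ : ∀ s ∈ I, HasDerivAt θ (θ' s) s)
    (hunit : ∀ s ∈ I, (r' s) ^ 2 + (m (r s)) ^ 2 * (θ' s) ^ 2 = 1)
    (hclair : ∀ s ∈ I, (m (r s)) ^ 2 * θ' s = ν) :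
    ∀ s ∈ I,
      let nP := Real.sqrt ((r' s) ^ 2 + (m (r s)) ^ 2 * (θ' s + μ) ^ 2)
      let sinψ := m (r s) * (θ' s + μ) / nP
      m (r s) * sinψ
        = (ν + μ * (m (r s)) ^ 2) / Real.sqrt (1 + 2 * μ * ν + μ ^ 2 * (m (r s)) ^ 2) :=
  randers_second_clairaut_relation_general m μ ν I r r' θ' hunit hclair
end

section
/- (Meridians cannot be F-geodesics.) Let μ > 0 and let m : ℝ → ℝ be differentiable with m(x) > 0 and μ²m(x)² < 1 for all x. Let I be a nondegenerate interval and let r, θ : I → ℝ be twice differentiable, satisfying the geodesic equations r'' = m(r)m'(r)(θ')², θ'' = −2(m'(r)/m(r))r'θ', the unit-speed condition r'² + m(r)²(θ')² = 1, and θ'(s) = −μ for all s ∈ I. Then m'(r(s)) = 0 and r'(s)² = 1 − μ²m(r(s))² > 0 for all s ∈ I, r' is a nonzero constant, so r(I) is a nondegenerate interval on which m' vanishes identically; hence m is constant on a nondegenerate interval. In particular, if m is not constant on any nondegenerate interval, no such solution exists, i.e. no meridian (r(s), θ₀) of the surface of revolution is a geodesic of the rotational Randers metric. -/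
/-!
Along such a curve `θ'` is the constant `-μ`, so `θ'' = 0`, and the second geodesic equation
`θ'' = -2 (m'(r)/m(r)) r' θ'` forces `m'(r) = 0`, since `m > 0`, `μ ≠ 0`, and the unit-speed
condition gives `r'² = 1 - μ² m(r)² > 0`. The first geodesic equation then gives `r'' = 0`, so `r`
is affine with nonzero slope; hence `r(I)` is a nondegenerate interval on which `m'` vanishes,
and `m` is constant there.
-/

open Set

section ConstantDerivative

variable {E : Type*} [NormedAddCommGroup E] [NormedSpace ℝ E] {s : Set ℝ} {f : ℝ → E}

theorem Convex.is_const_of_hasDerivWithinAt_zero (hs : Convex ℝ s)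
    (hf : ∀ x ∈ s, HasDerivWithinAt f 0 s x) {x y : ℝ} (hx : x ∈ s) (hy : y ∈ s) :
    f x = f y := by
  simpa only [(dist_eq_norm _ _).symm, zero_mul, dist_le_zero, eq_comm] using
    hs.norm_image_sub_le_of_norm_hasDerivWithin_le hf (fun _ _ => norm_zero.le) hx hy

theorem Convex.injOn_of_hasDerivWithinAt_const {c : E} (hs : Convex ℝ s)
    (hf : ∀ x ∈ s, HasDerivWithinAt f c s x) (hc : c ≠ 0) : InjOn f s := by
  intro x hx y hy hxy
  have hconst : f x - x • c = f y - y • c :=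
    hs.is_const_of_hasDerivWithinAt_zero (f := fun t => f t - t • c)
      (fun t ht => ((hf t ht).sub ((hasDerivWithinAt_id t s).smul_const c)).congr_deriv (by simp))
      hx hy
  rw [hxy, sub_right_inj] at hconst
  exact smul_left_injective ℝ hc hconst

theorem HasDerivWithinAt.eq_zero_of_eqOn_const {f' c : E} {x : ℝ}
    (hf : HasDerivWithinAt f f' s x) (hs : UniqueDiffWithinAt ℝ s x) (hfc : EqOn f (fun _ => c) s)
    (hx : x ∈ s) : f' = 0 :=
  hs.eq_deriv _ hf ((hasDerivWithinAt_const x s c).congr hfc (hfc hx))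

end ConstantDerivative

theorem meridian_not_F_geodesic_general
    (μ : ℝ) (hμ : 0 < μ) (m m' : ℝ → ℝ)
    (hm : ∀ x, HasDerivAt m (m' x) x)
    (hmpos : ∀ x, 0 < m x) (hmb : ∀ x, μ ^ 2 * (m x) ^ 2 < 1)
    (I : Set ℝ) (hI : Convex ℝ I) (hInd : ∃ a ∈ I, ∃ b ∈ I, a ≠ b)
    (r r' θ' r'' θ'' : ℝ → ℝ)
    (hr : ∀ s ∈ I, HasDerivAt r (r' s) s)
    (hr' : ∀ s ∈ I, HasDerivAt r' (r'' s) s)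
    (hθ' : ∀ s ∈ I, HasDerivAt θ' (θ'' s) s)
    (geo1 : ∀ s ∈ I, r'' s = m (r s) * m' (r s) * (θ' s) ^ 2)
    (geo2 : ∀ s ∈ I, θ'' s = -2 * (m' (r s) / m (r s)) * r' s * θ' s)
    (hunit : ∀ s ∈ I, (r' s) ^ 2 + (m (r s)) ^ 2 * (θ' s) ^ 2 = 1)
    (hθμ : ∀ s ∈ I, θ' s = -μ) :
    (∀ s ∈ I, m' (r s) = 0) ∧
    (∀ s ∈ I, (r' s) ^ 2 = 1 - μ ^ 2 * (m (r s)) ^ 2 ∧ 0 < (r' s) ^ 2) ∧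
    (∀ s ∈ I, ∀ t ∈ I, r' s = r' t) ∧
    (r '' I).OrdConnected ∧
    (∃ a ∈ r '' I, ∃ b ∈ r '' I, a ≠ b) ∧
    (∀ x ∈ r '' I, m' x = 0) ∧
    (∀ x ∈ r '' I, ∀ y ∈ r '' I, m x = m y) := by
  have hud : UniqueDiffOn ℝ I :=
    uniqueDiffOn_convex hI (hI.nontrivial_iff_nonempty_interior.1 hInd)
  have hspeed : ∀ s ∈ I, (r' s) ^ 2 = 1 - μ ^ 2 * (m (r s)) ^ 2 ∧ 0 < (r' s) ^ 2 := by
    intro s hs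
    have h := hunit s hs
    rw [hθμ s hs, neg_sq] at h
    exact ⟨by linarith, by linarith [hmb (r s)]⟩
  have hr'_ne : ∀ s ∈ I, r' s ≠ 0 := fun s hs => sq_pos_iff.1 (hspeed s hs).2
  have hθ''_zero : ∀ s ∈ I, θ'' s = 0 := fun s hs =>
    (hθ' s hs).hasDerivWithinAt.eq_zero_of_eqOn_const (hud s hs) hθμ hs
  have hm'_zero : ∀ s ∈ I, m' (r s) = 0 := fun s hs => by
    simpa [hθ''_zero s hs, hθμ s hs, (hmpos _).ne', hμ.ne', hr'_ne s hs] using geo2 s hs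
  have hr'_const : ∀ s ∈ I, ∀ t ∈ I, r' s = r' t := fun s hs t ht =>
    hI.is_const_of_hasDerivWithinAt_zero (fun u hu => by
      simpa [geo1 u hu, hm'_zero u hu] using (hr' u hu).hasDerivWithinAt) hs ht
  obtain ⟨a, ha⟩ : I.Nonempty := Nontrivial.nonempty hInd
  have hr_inj : InjOn r I := hI.injOn_of_hasDerivWithinAt_const
    (fun s hs => hr'_const s hs a ha ▸ (hr s hs).hasDerivWithinAt) (hr'_ne a ha)
  have hm'_zero_image : ∀ x ∈ r '' I, m' x = 0 := forall_mem_image.2 hm'_zero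
  have hconn : (r '' I).OrdConnected :=
    (hI.isPreconnected.image r fun s hs => (hr s hs).continuousAt.continuousWithinAt).ordConnected
  refine ⟨hm'_zero, hspeed, hr'_const, hconn, Nontrivial.image_of_injOn hInd hr_inj,
    hm'_zero_image, fun x hx y hy => ?_⟩
  exact hconn.convex.is_const_of_hasDerivWithinAt_zero
    (fun z hz => hm'_zero_image z hz ▸ (hm z).hasDerivWithinAt) hx hy

/-- Meridians cannot be `F`-geodesics: if an `h`-unit-speed geodesic of the warped
metric `h = dr² + m(r)²dθ²` satisfies `θ' ≡ -μ` on a nondegenerate interval `I` (so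
that its twist is a meridian), then `m'` vanishes along `r`, `r'` is a nonzero
constant, and `m'` vanishes identically on the nondegenerate interval `r(I)`, forcing
`m` to be constant there. -/
theorem meridian_not_F_geodesic
    (μ : ℝ) (hμ : 0 < μ) (m m' : ℝ → ℝ)
    (hm : ∀ x, HasDerivAt m (m' x) x)
    (hmpos : ∀ x, 0 < m x) (hmb : ∀ x, μ ^ 2 * (m x) ^ 2 < 1)
    (I : Set ℝ) (hI : Convex ℝ I) (hInd : ∃ a ∈ I, ∃ b ∈ I, a ≠ b)
    (r θ r' θ' r'' θ'' : ℝ → ℝ)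
    (hr : ∀ s ∈ I, HasDerivAt r (r' s) s)
    (hr' : ∀ s ∈ I, HasDerivAt r' (r'' s) s)
    (hθ : ∀ s ∈ I, HasDerivAt θ (θ' s) s)
    (hθ' : ∀ s ∈ I, HasDerivAt θ' (θ'' s) s)
    (geo1 : ∀ s ∈ I, r'' s = m (r s) * m' (r s) * (θ' s) ^ 2)
    (geo2 : ∀ s ∈ I, θ'' s = -2 * (m' (r s) / m (r s)) * r' s * θ' s)
    (hunit : ∀ s ∈ I, (r' s) ^ 2 + (m (r s)) ^ 2 * (θ' s) ^ 2 = 1)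
    (hθμ : ∀ s ∈ I, θ' s = -μ) :
    (∀ s ∈ I, m' (r s) = 0) ∧
    (∀ s ∈ I, (r' s) ^ 2 = 1 - μ ^ 2 * (m (r s)) ^ 2 ∧ 0 < (r' s) ^ 2) ∧
    (∀ s ∈ I, ∀ t ∈ I, r' s = r' t) ∧
    (r '' I).OrdConnected ∧
    (∃ a ∈ r '' I, ∃ b ∈ r '' I, a ≠ b) ∧
    (∀ x ∈ r '' I, m' x = 0) ∧
    (∀ x ∈ r '' I, ∀ y ∈ r '' I, m x = m y) :=
  meridian_not_F_geodesic_general μ hμ m m' hm hmpos hmb I hI hInd r r' θ' r'' θ'' hr hr' hθ' geo1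
    geo2 hunit hθμ
end

section
/- Let m : ℝ → ℝ be continuous and let r, θ : [a, b] → ℝ be differentiable with r'(s)² + m(r(s))²θ'(s)² = 1 and m(r(s))²θ'(s) = ν ≠ 0 for all s, with m(r(s)) > |ν| for all s, and suppose r'(s) has constant sign ε ∈ {−1, +1} on [a, b). Then b − a = ε·∫_{r(a)}^{r(b)} m(t)/√(m(t)² − ν²) dt, θ(b) − θ(a) = ε·∫_{r(a)}^{r(b)} (ν/m(t))·(1/√(m(t)² − ν²)) dt, and consequently the twisted geodesic P(s) = (r(s), θ(s) + μs) satisfies P²(b) − P²(a) = ε·∫_{r(a)}^{r(b)} [ξ(t, ν) + μ·η(t, ν)] dt, where ξ(t, ν) = (ν/m(t))·(1/√(m(t)² − ν²)) and η(t, ν) = m(t)/√(m(t)² − ν²). -/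
/-!
Unit speed and Clairaut's relation give `θ' = ν / m(r)²` and `r'² = (m(r)² - ν²) / m(r)²`, so
`r' = ε √(m(r)² - ν²) / m(r)` and therefore `η(r) r' = ε` and `ξ(r) r' = ε θ'`. Substituting
`t = r(s)` turns `∫ η` and `∫ ξ` over `[r a, r b]` into `ε (b - a)` and `ε (θ b - θ a)`.
The substitution needs `r'` continuous on the closed interval, i.e. the sign of `r'` also at `b`;
since `r'` never vanishes, Darboux's theorem supplies it.
-/

open Set

theorem pos_right_of_hasDerivWithinAt_of_ne_zero {f f' : ℝ → ℝ} {a b : ℝ} (hab : a < b)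
    (hf : ∀ x ∈ Icc a b, HasDerivWithinAt f (f' x) (Icc a b) x) (hb : f' b ≠ 0)
    (hpos : ∀ x ∈ Ico a b, 0 < f' x) : 0 < f' b := by
  by_contra! hb_nonpos
  obtain ⟨c, hc, hc_zero⟩ := exists_hasDerivWithinAt_eq_of_lt_of_gt hab.le hf
    (hpos a ⟨le_rfl, hab⟩) (lt_of_le_of_ne hb_nonpos hb)
  exact (hpos c (Ioo_subset_Ico_self hc)).ne' hc_zero

theorem intervalIntegral.integral_eq_sub_of_hasDerivAt_mul_comp {r r' g φ : ℝ → ℝ} {a b : ℝ}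
    (hr : ∀ s ∈ uIcc a b, HasDerivAt r (r' s) s) (hr' : ContinuousOn r' (uIcc a b))
    (hg : ContinuousOn g (r '' uIcc a b))
    (hφ : ∀ s ∈ uIcc a b, HasDerivAt φ (g (r s) * r' s) s) :
    ∫ t in r a..r b, g t = φ b - φ a := by
  rw [← integral_comp_mul_deriv' hr hr' hg]
  refine integral_eq_sub_of_hasDerivAt hφ (ContinuousOn.intervalIntegrable ?_)
  exact (hg.comp (HasDerivAt.continuousOn hr) (mapsTo_image r _)).mul hr'

section Clairaut

variable {M ν x y ε : ℝ}

theorem sub_sq_pos_of_abs_lt (h : |ν| < M) : 0 < M ^ 2 - ν ^ 2 := by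
  have := sq_lt_sq' (neg_lt_of_abs_lt h) (lt_of_abs_lt h)
  linarith

theorem sq_mul_sq_eq_of_unit_of_clairaut (hunit : x ^ 2 + M ^ 2 * y ^ 2 = 1)
    (hclair : M ^ 2 * y = ν) : M ^ 2 * x ^ 2 = M ^ 2 - ν ^ 2 := by
  linear_combination M ^ 2 * hunit - (M ^ 2 * y + ν) * hclair

theorem ne_zero_of_unit_of_clairaut (h : |ν| < M) (hunit : x ^ 2 + M ^ 2 * y ^ 2 = 1)
    (hclair : M ^ 2 * y = ν) : x ≠ 0 := by
  rintro rfl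
  have := sq_mul_sq_eq_of_unit_of_clairaut hunit hclair
  linarith [sub_sq_pos_of_abs_lt h]

theorem eq_mul_sqrt_div_of_unit_of_clairaut (h : |ν| < M) (hε : ε = 1 ∨ ε = -1)
    (hunit : x ^ 2 + M ^ 2 * y ^ 2 = 1) (hclair : M ^ 2 * y = ν) (hx : 0 < ε * x) :
    x = ε * (√(M ^ 2 - ν ^ 2) / M) := by
  have hM : 0 < M := (abs_nonneg ν).trans_lt h
  have hε2 : ε ^ 2 = 1 := by rcases hε with rfl | rfl <;> norm_num
  have hsqrt : √(M ^ 2 - ν ^ 2) = M * (ε * x) := by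
    rw [← sq_mul_sq_eq_of_unit_of_clairaut hunit hclair, Real.sqrt_eq_iff_eq_sq (by positivity)
      (by positivity)]
    linear_combination -(M ^ 2 * x ^ 2) * hε2
  rw [hsqrt]
  field_simp
  linear_combination -x * hε2

end Clairaut

section Profile

variable (m : ℝ → ℝ) (ν : ℝ)

noncomputable def clairautRadialSpeed (t : ℝ) : ℝ := √(m t ^ 2 - ν ^ 2) / m t

noncomputable def clairautEta (t : ℝ) : ℝ := m t / √(m t ^ 2 - ν ^ 2)

noncomputable def clairautXi (t : ℝ) : ℝ := ν / m t * (1 / √(m t ^ 2 - ν ^ 2))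

variable {m ν} {t x y ε : ℝ}

theorem clairautEta_mul_eq (ht : |ν| < m t) (hx : x = ε * clairautRadialSpeed m ν t) :
    clairautEta m ν t * x = ε := by
  have hm : 0 < m t := (abs_nonneg ν).trans_lt ht
  have hs : 0 < √(m t ^ 2 - ν ^ 2) := Real.sqrt_pos.2 (sub_sq_pos_of_abs_lt ht)
  rw [hx, clairautEta, clairautRadialSpeed]
  field_simp

theorem clairautXi_mul_eq (ht : |ν| < m t) (hx : x = ε * clairautRadialSpeed m ν t)
    (hclair : m t ^ 2 * y = ν) : clairautXi m ν t * x = ε * y := by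
  have hm : 0 < m t := (abs_nonneg ν).trans_lt ht
  have hs : 0 < √(m t ^ 2 - ν ^ 2) := Real.sqrt_pos.2 (sub_sq_pos_of_abs_lt ht)
  have hy : y = ν / m t ^ 2 := by
    rw [← hclair]
    field_simp
  rw [hx, hy, clairautXi, clairautRadialSpeed]
  field_simp

theorem continuousOn_clairautRadialSpeed (hm : Continuous m) :
    ContinuousOn (clairautRadialSpeed m ν) {t | |ν| < m t} := fun t ht =>
  ((by fun_prop : Continuous fun t => √(m t ^ 2 - ν ^ 2)).continuousAt.div hm.continuousAt
    ((abs_nonneg ν).trans_lt ht).ne').continuousWithinAt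

theorem continuousOn_clairautEta (hm : Continuous m) :
    ContinuousOn (clairautEta m ν) {t | |ν| < m t} := fun t ht =>
  (hm.continuousAt.div (by fun_prop : Continuous fun t => √(m t ^ 2 - ν ^ 2)).continuousAt
    (Real.sqrt_pos.2 (sub_sq_pos_of_abs_lt ht)).ne').continuousWithinAt

theorem continuousOn_clairautXi (hm : Continuous m) :
    ContinuousOn (clairautXi m ν) {t | |ν| < m t} := fun t ht =>
  ((continuousAt_const.div hm.continuousAt ((abs_nonneg ν).trans_lt ht).ne').mul
    (continuousAt_const.div (by fun_prop : Continuous fun t => √(m t ^ 2 - ν ^ 2)).continuousAt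
      (Real.sqrt_pos.2 (sub_sq_pos_of_abs_lt ht)).ne')).continuousWithinAt

end Profile

theorem radial_deriv_eq_of_unit_of_clairaut {m r r' θ' : ℝ → ℝ} {ν ε a b : ℝ} (hab : a < b)
    (hr : ∀ s ∈ Icc a b, HasDerivAt r (r' s) s)
    (hunit : ∀ s ∈ Icc a b, r' s ^ 2 + m (r s) ^ 2 * θ' s ^ 2 = 1)
    (hclair : ∀ s ∈ Icc a b, m (r s) ^ 2 * θ' s = ν)
    (hmν : ∀ s ∈ Icc a b, |ν| < m (r s)) (hε : ε = 1 ∨ ε = -1)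
    (hsign : ∀ s ∈ Ico a b, 0 < ε * r' s) :
    ∀ s ∈ Icc a b, r' s = ε * clairautRadialSpeed m ν (r s) := by
  have hb : b ∈ Icc a b := right_mem_Icc.2 hab.le
  have hsign_b : 0 < ε * r' b := by
    refine pos_right_of_hasDerivWithinAt_of_ne_zero (f' := fun s => ε * r' s) hab
      (fun s hs => ((hr s hs).const_mul ε).hasDerivWithinAt) ?_ hsign
    exact mul_ne_zero (by rcases hε with rfl | rfl <;> norm_num)
      (ne_zero_of_unit_of_clairaut (hmν b hb) (hunit b hb) (hclair b hb))
  intro s hs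
  refine eq_mul_sqrt_div_of_unit_of_clairaut (hmν s hs) hε (hunit s hs) (hclair s hs) ?_
  rcases hs.2.lt_or_eq with hsb | rfl
  exacts [hsign s ⟨hs.1, hsb⟩, hsign_b]

theorem randers_geodesic_integral_formulas_general
    (m : ℝ → ℝ) (hmcont : Continuous m) (μ ν : ℝ)
    (a b : ℝ) (hab : a ≤ b) (r θ r' θ' : ℝ → ℝ)
    (hr : ∀ s ∈ Set.Icc a b, HasDerivAt r (r' s) s)
    (hθ : ∀ s ∈ Set.Icc a b, HasDerivAt θ (θ' s) s)
    (hunit : ∀ s ∈ Set.Icc a b, (r' s) ^ 2 + (m (r s)) ^ 2 * (θ' s) ^ 2 = 1)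
    (hclair : ∀ s ∈ Set.Icc a b, (m (r s)) ^ 2 * θ' s = ν)
    (hmν : ∀ s ∈ Set.Icc a b, |ν| < m (r s))
    (ε : ℝ) (hε : ε = 1 ∨ ε = -1)
    (hsign : ∀ s ∈ Set.Ico a b, 0 < ε * r' s) :
    b - a = ε * ∫ t in (r a)..(r b), m t / Real.sqrt ((m t) ^ 2 - ν ^ 2) ∧
    θ b - θ a = ε * ∫ t in (r a)..(r b), (ν / m t) * (1 / Real.sqrt ((m t) ^ 2 - ν ^ 2)) ∧
    (θ b + μ * b) - (θ a + μ * a)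
      = ε * ∫ t in (r a)..(r b),
          ((ν / m t) * (1 / Real.sqrt ((m t) ^ 2 - ν ^ 2))
            + μ * (m t / Real.sqrt ((m t) ^ 2 - ν ^ 2))) := by
  rcases hab.eq_or_lt with rfl | hlt
  · simp
  have hr'_eq := radial_deriv_eq_of_unit_of_clairaut hlt hr hunit hclair hmν hε hsign
  have hη (s) (hs : s ∈ Icc a b) := clairautEta_mul_eq (hmν s hs) (hr'_eq s hs)
  have hξ (s) (hs : s ∈ Icc a b) := clairautXi_mul_eq (hmν s hs) (hr'_eq s hs) (hclair s hs)
  have hsubst (g φ : ℝ → ℝ) (hg : ContinuousOn g {t | |ν| < m t})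
      (hφ : ∀ s ∈ Icc a b, HasDerivAt φ (g (r s) * r' s) s) :
      ∫ t in r a..r b, g t = φ b - φ a := by
    have hr' : ContinuousOn r' (Icc a b) :=
      (continuousOn_const.mul ((continuousOn_clairautRadialSpeed hmcont).comp
        (HasDerivAt.continuousOn hr) hmν)).congr hr'_eq
    rw [← uIcc_of_le hab] at hr hr' hφ hmν
    exact intervalIntegral.integral_eq_sub_of_hasDerivAt_mul_comp hr hr'
      (hg.mono (image_subset_iff.2 hmν)) hφ
  have hIη := hsubst (clairautEta m ν) (fun s => ε * s) (continuousOn_clairautEta hmcont)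
    fun s hs => ((hasDerivAt_id s).const_mul ε).congr_deriv (by rw [hη s hs, mul_one])
  have hIξ := hsubst (clairautXi m ν) (fun s => ε * θ s) (continuousOn_clairautXi hmcont)
    fun s hs => ((hθ s hs).const_mul ε).congr_deriv (hξ s hs).symm
  have hIP := hsubst (fun t => clairautXi m ν t + μ * clairautEta m ν t)
    (fun s => ε * (θ s + μ * s))
    ((continuousOn_clairautXi hmcont).add
      (continuousOn_const.mul (continuousOn_clairautEta hmcont)))
    fun s hs => (((hθ s hs).add ((hasDerivAt_id s).const_mul μ)).const_mul ε).congr_deriv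
      (by rw [add_mul, mul_assoc, hξ s hs, hη s hs]; ring)
  simp only [clairautEta, clairautXi] at hIη hIξ hIP
  have hε2 : ε ^ 2 = 1 := by rcases hε with rfl | rfl <;> norm_num
  refine ⟨?_, ?_, ?_⟩
  · linear_combination (a - b) * hε2 - ε * hIη
  · linear_combination (θ a - θ b) * hε2 - ε * hIξ
  · linear_combination (θ a - θ b + μ * (a - b)) * hε2 - ε * hIP

/-- Explicit integral formulas for a geodesic segment of the rotational Randers
surface of revolution: if `r'` has constant sign `ε` on `[a, b)`, then
`b - a = ε∫ η`, `θ(b) - θ(a) = ε∫ ξ`, and the twisted geodesic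
`P²(s) = θ(s) + μs` satisfies `P²(b) - P²(a) = ε∫ (ξ + μη)`, where
`ξ(t, ν) = (ν/m(t))/√(m(t)² - ν²)` and `η(t, ν) = m(t)/√(m(t)² - ν²)`. -/
theorem randers_geodesic_integral_formulas
    (m : ℝ → ℝ) (hmcont : Continuous m) (μ ν : ℝ) (hν : ν ≠ 0)
    (a b : ℝ) (hab : a ≤ b) (r θ r' θ' : ℝ → ℝ)
    (hr : ∀ s ∈ Set.Icc a b, HasDerivAt r (r' s) s)
    (hθ : ∀ s ∈ Set.Icc a b, HasDerivAt θ (θ' s) s)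
    (hunit : ∀ s ∈ Set.Icc a b, (r' s) ^ 2 + (m (r s)) ^ 2 * (θ' s) ^ 2 = 1)
    (hclair : ∀ s ∈ Set.Icc a b, (m (r s)) ^ 2 * θ' s = ν)
    (hmν : ∀ s ∈ Set.Icc a b, |ν| < m (r s))
    (ε : ℝ) (hε : ε = 1 ∨ ε = -1)
    (hsign : ∀ s ∈ Set.Ico a b, 0 < ε * r' s) :
    b - a = ε * ∫ t in (r a)..(r b), m t / Real.sqrt ((m t) ^ 2 - ν ^ 2) ∧
    θ b - θ a = ε * ∫ t in (r a)..(r b), (ν / m t) * (1 / Real.sqrt ((m t) ^ 2 - ν ^ 2)) ∧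
    (θ b + μ * b) - (θ a + μ * a)
      = ε * ∫ t in (r a)..(r b),
          ((ν / m t) * (1 / Real.sqrt ((m t) ^ 2 - ν ^ 2))
            + μ * (m t / Real.sqrt ((m t) ^ 2 - ν ^ 2))) :=
  randers_geodesic_integral_formulas_general m hmcont μ ν a b hab r θ r' θ' hr hθ hunit hclair hmν ε
    hε hsign
end
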